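/- Let $p\in(0,1)$, $q<0$, $\kappa\in(0,1)$, and suppose $\kappa\bigl(1+\sqrt{(1-p)/(1-q)}\bigr)<1$. For $c\ge 0$ and $\tau\ge 0$, let $\mu_1(c)$ and $\lambda_1(c)$ be the unique positive roots of $z^2-cz-1+pe^{-c\tau z}=0$ and $z^2-cz-1+qe^{-c\tau z}=0$ respectively, and set $K(c)=\frac{1-q}{p-q}\bigl(1-\mu_1(c)/\lambda_1(c)\bigr)$. Then $K(0)=\bigl(1+\sqrt{(1-p)/(1-q)}\bigr)^{-1}>\kappa$, $K(c)\to 0$ as $c\to+\infty$, and $K$ is continuous and strictly decreasing on $(0,\infty)$; consequently the equation $K(c)=\kappa$ has a unique positive solution $c$. -/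

import Mathlib

/-!
Both characteristic functions `F(z) = z² - c z - 1 + a e^{-cτz}` (with `a = p` or `a = q`) are
negative at `z = 0` and tend to `+∞`, so their unique positive roots are sign changes. This yields
the values `√(1-p)`, `√(1-q)` at `c = 0`, continuity of the roots in `c`, and the comparisons
`c < μ₁ < λ₁ ≤ c + √(1-q)`, whence `μ₁/λ₁ → 1`. Writing `x = cτz`, at a root one has
`z ∂_zF = z² + 1 - a(1+x)e^{-x} > 0`, so the implicit function theorem applies for `c > 0`, and
comparing the logarithmic derivatives gives `μ₁'/μ₁ > λ₁'/λ₁`: the ratio `μ₁/λ₁` increases strictly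
and `K = (1-q)/(p-q) (1 - μ₁/λ₁)` decreases strictly from `K(0)` to `0`.
-/

open Filter Topology Set Real

def IsUniquePosRoot (f : ℝ → ℝ) (m : ℝ) : Prop :=
  0 < m ∧ f m = 0 ∧ ∀ z > 0, f z = 0 → z = m

namespace IsUniquePosRoot

variable {f : ℝ → ℝ} {m z : ℝ}

theorem neg_of_lt (hm : IsUniquePosRoot f m) (hf : Continuous f) (h0 : f 0 < 0)
    (hz : 0 ≤ z) (hzm : z < m) : f z < 0 := by
  by_contra! hfz
  obtain ⟨w, ⟨hw0, hwz⟩, hw⟩ := intermediate_value_Ioc hz hf.continuousOn ⟨h0, hfz⟩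
  linarith [hm.2.2 w hw0 hw]

theorem pos_of_gt (hm : IsUniquePosRoot f m) (hf : Continuous f)
    (htop : Tendsto f atTop atTop) (hmz : m < z) : 0 < f z := by
  by_contra! hfz
  obtain ⟨w, hw, hzw⟩ := ((htop.eventually_gt_atTop 0).and (eventually_gt_atTop z)).exists
  obtain ⟨u, ⟨hzu, -⟩, hu⟩ := intermediate_value_Ico hzw.le hf.continuousOn ⟨hfz, hw⟩
  linarith [hm.2.2 u (by linarith [hm.1]) hu]

theorem le_of_nonneg (hm : IsUniquePosRoot f m) (hf : Continuous f) (h0 : f 0 < 0)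
    (hz : 0 ≤ z) (hfz : 0 ≤ f z) : m ≤ z :=
  not_lt.1 fun hzm => (hm.neg_of_lt hf h0 hz hzm).not_ge hfz

theorem lt_of_neg (hm : IsUniquePosRoot f m) (hf : Continuous f)
    (htop : Tendsto f atTop atTop) (hfz : f z < 0) : z < m := by
  refine lt_of_le_of_ne (not_lt.1 fun hmz => (hm.pos_of_gt hf htop hmz).not_gt hfz) ?_
  rintro rfl
  exact hfz.ne hm.2.1

theorem continuousOn {f : ℝ → ℝ → ℝ} {m : ℝ → ℝ} {s : Set ℝ}
    (hfc : ∀ z, Continuous (f · z)) (hfz : ∀ c ∈ s, Continuous (f c))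
    (h0 : ∀ c ∈ s, f c 0 < 0) (htop : ∀ c ∈ s, Tendsto (f c) atTop atTop)
    (hm : ∀ c ∈ s, IsUniquePosRoot (f c) (m c)) : ContinuousOn m s := by
  intro c₀ hc₀
  rw [ContinuousWithinAt, Metric.tendsto_nhds]
  intro ε hε
  obtain ⟨δ, hδ, hδε, hδm⟩ : ∃ δ, 0 < δ ∧ δ < ε ∧ δ < m c₀ := by
    have := lt_min hε (hm c₀ hc₀).1
    exact ⟨min ε (m c₀) / 2, by positivity, by linarith [min_le_left ε (m c₀)],
      by linarith [min_le_right ε (m c₀)]⟩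
  have hlo : f c₀ (m c₀ - δ) < 0 :=
    (hm c₀ hc₀).neg_of_lt (hfz c₀ hc₀) (h0 c₀ hc₀) (by linarith) (by linarith)
  have hhi : 0 < f c₀ (m c₀ + δ) :=
    (hm c₀ hc₀).pos_of_gt (hfz c₀ hc₀) (htop c₀ hc₀) (by linarith)
  filter_upwards [self_mem_nhdsWithin,
    nhdsWithin_le_nhds (((hfc _).tendsto c₀).eventually_lt_const hlo),
    nhdsWithin_le_nhds (((hfc _).tendsto c₀).eventually_const_lt hhi)] with c hc hlo' hhi'
  obtain ⟨w, hw, hfw⟩ :=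
    intermediate_value_Ioo (by linarith) (hfz c hc).continuousOn ⟨hlo', hhi'⟩
  rw [← (hm c hc).2.2 w (by linarith [hw.1]) hfw, Real.dist_eq, abs_lt]
  constructor <;> linarith [hw.1, hw.2]

end IsUniquePosRoot

theorem HasStrictFDerivAt.hasDerivAt_of_implicit {F : ℝ × ℝ → ℝ} {L : ℝ × ℝ →L[ℝ] ℝ}
    {m : ℝ → ℝ} {c₀ : ℝ} (hF : HasStrictFDerivAt F L (c₀, m c₀)) (hLz : L (0, 1) ≠ 0)
    (hm : ContinuousAt m c₀) (hroot : ∀ᶠ c in 𝓝 c₀, F (c, m c) = 0) :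
    HasDerivAt m (-L (1, 0) / L (0, 1)) c₀ := by
  set e := ContinuousLinearEquiv.unitsEquivAut ℝ (Units.mk0 _ hLz)
  have he : L ∘L .inr ℝ ℝ ℝ = e := by ext; simp [e]
  have hinv : (L ∘L .inr ℝ ℝ ℝ).IsInvertible := by rw [he]; exact ⟨e, rfl⟩
  set ψ := hF.implicitFunctionOfProdDomain hinv
  have hψ : HasDerivAt ψ (-L (1, 0) / L (0, 1)) c₀ := by
    refine (hF.hasStrictFDerivAt_implicitFunctionOfProdDomain hinv).hasStrictDerivAt
      |>.hasDerivAt.congr_deriv ?_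
    rw [he, ContinuousLinearMap.inverse_equiv]
    simp [e, div_eq_mul_inv]
  -- the implicit function is locally the only solution, and `(c, m c)` stays near `(c₀, m c₀)`
  have hmψ : ∀ᶠ c in 𝓝 c₀, m c = ψ c := by
    have hcurve : Tendsto (fun c => (c, m c)) (𝓝 c₀) (𝓝 (c₀, m c₀)) :=
      continuousAt_id.prodMk hm
    filter_upwards [hroot,
      hcurve.eventually (hF.eventually_apply_eq_iff_implicitFunctionOfProdDomain hinv)]
      with c hc hiff
    exact (hiff.1 (hc.trans hroot.self_of_nhds.symm)).symm
  exact hψ.congr_of_eventuallyEq hmψ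

theorem existsUnique_pos_eq_of_strictAntiOn {f : ℝ → ℝ} {κ L : ℝ}
    (hcont : ContinuousOn f (Ici 0)) (hanti : StrictAntiOn f (Ioi 0)) (h0 : κ < f 0)
    (hlim : Tendsto f atTop (𝓝 L)) (hL : L < κ) : ∃! c, 0 < c ∧ f c = κ := by
  obtain ⟨M, hM, hM0⟩ :=
    ((hlim.eventually (eventually_lt_nhds hL)).and (eventually_gt_atTop 0)).exists
  obtain ⟨c, hc, hfc⟩ := intermediate_value_Ioo' hM0.le (hcont.mono Icc_subset_Ici_self) ⟨hM, h0⟩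
  exact ⟨c, ⟨hc.1, hfc⟩, fun c' ⟨hc', hfc'⟩ => hanti.injOn hc' hc.1 (hfc'.trans hfc.symm)⟩

noncomputable def toyChar (a τ c z : ℝ) : ℝ := z ^ 2 - c * z - 1 + a * exp (-(c * τ) * z)

/-- `m'/m` for a root `m` of `toyChar a τ c`, by implicit differentiation in `c`. -/
noncomputable def toyRootLogDeriv (a τ c z : ℝ) : ℝ :=
  (1 + a * τ * exp (-(c * τ) * z)) / (2 * z - c - a * c * τ * exp (-(c * τ) * z))

section toyChar

variable {a b τ c m l : ℝ}

theorem continuous_toyChar : Continuous (toyChar a τ c) := by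
  unfold toyChar; fun_prop

theorem continuous_toyChar_param (z : ℝ) : Continuous (toyChar a τ · z) := by
  unfold toyChar; fun_prop

theorem toyChar_zero : toyChar a τ c 0 = a - 1 := by
  simp [toyChar, neg_add_eq_sub]

theorem exp_neg_mul_le_one (hc : 0 ≤ c) (hτ : 0 ≤ τ) {z : ℝ} (hz : 0 ≤ z) :
    exp (-(c * τ) * z) ≤ 1 :=
  exp_le_one_iff.2 (by nlinarith [mul_nonneg hc hτ])

theorem tendsto_toyChar_atTop (hc : 0 ≤ c) (hτ : 0 ≤ τ) :
    Tendsto (toyChar a τ c) atTop atTop := by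
  have hpoly : Tendsto (fun z => z * (z - c) + -(1 + |a|)) atTop atTop :=
    tendsto_atTop_add_const_right _ _
      (tendsto_id.atTop_mul_atTop₀ (tendsto_atTop_add_const_right _ _ tendsto_id))
  refine tendsto_atTop_mono' _ ?_ hpoly
  filter_upwards [eventually_ge_atTop 0] with z hz
  have hE := exp_neg_mul_le_one hc hτ hz
  have hE0 := (exp_pos (-(c * τ) * z)).le
  simp only [toyChar]
  nlinarith [mul_nonneg (abs_nonneg a) (sub_nonneg.2 hE),
    mul_nonneg (neg_le_iff_add_nonneg.1 (neg_abs_le a)) hE0]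

theorem lt_toyRoot (ha : a < 1) (hc : 0 ≤ c) (hτ : 0 ≤ τ)
    (hm : IsUniquePosRoot (toyChar a τ c) m) : c < m := by
  refine hm.lt_of_neg continuous_toyChar (tendsto_toyChar_atTop hc hτ) ?_
  have hE := exp_neg_mul_le_one hc hτ hc
  have hE0 := exp_pos (-(c * τ) * c)
  simp only [toyChar]
  nlinarith [mul_pos (sub_pos.2 ha) hE0]

theorem toyRoot_lt_toyRoot (hba : b < a) (hc : 0 ≤ c) (hτ : 0 ≤ τ)
    (hm : IsUniquePosRoot (toyChar a τ c) m) (hl : IsUniquePosRoot (toyChar b τ c) l) : m < l := by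
  refine hl.lt_of_neg continuous_toyChar (tendsto_toyChar_atTop hc hτ) ?_
  have hroot := hm.2.1
  simp only [toyChar] at hroot ⊢
  nlinarith [mul_pos (sub_pos.2 hba) (exp_pos (-(c * τ) * m))]

theorem toyRoot_le_add_sqrt (ha : a ≤ 0) (hc : 0 ≤ c) (hτ : 0 ≤ τ)
    (hm : IsUniquePosRoot (toyChar a τ c) m) : m ≤ c + √(1 - a) := by
  have hs0 : 0 ≤ √(1 - a) := sqrt_nonneg _
  refine hm.le_of_nonneg continuous_toyChar (by rw [toyChar_zero]; linarith) (by positivity) ?_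
  have hs := sq_sqrt (by linarith : 0 ≤ 1 - a)
  have hE := exp_neg_mul_le_one hc hτ (by positivity : 0 ≤ c + √(1 - a))
  simp only [toyChar]
  nlinarith [mul_nonneg (neg_nonneg.2 ha) (sub_nonneg.2 hE), mul_nonneg hc hs0]

theorem toyRoot_zero (ha : a < 1) (hm : IsUniquePosRoot (toyChar a τ 0) m) : m = √(1 - a) :=
  (hm.2.2 _ (sqrt_pos.2 (by linarith))
    (by simp [toyChar, sq_sqrt (by linarith : 0 ≤ 1 - a)])).symm

theorem toyChar_deriv_z_pos (ha : a ≤ 1) (hc : 0 ≤ c) (hτ : 0 ≤ τ)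
    (hm : IsUniquePosRoot (toyChar a τ c) m) :
    0 < 2 * m - c - a * c * τ * exp (-(c * τ) * m) := by
  have hxE : (1 + c * τ * m) * exp (-(c * τ) * m) ≤ 1 := by
    rw [neg_mul, exp_neg, ← div_eq_mul_inv, div_le_one (exp_pos _)]
    linarith [add_one_le_exp (c * τ * m)]
  have hroot : m ^ 2 - c * m - 1 + a * exp (-(c * τ) * m) = 0 := hm.2.1
  set E := exp (-(c * τ) * m)
  have hkey : m * (2 * m - c - a * c * τ * E) = m ^ 2 + 1 - a * ((1 + c * τ * m) * E) := by
    linear_combination hroot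
  have hxE0 : 0 ≤ (1 + c * τ * m) * E := by have := hm.1.le; positivity
  refine pos_of_mul_pos_right ?_ hm.1.le
  rw [hkey]
  nlinarith [mul_nonneg (sub_nonneg.2 ha) hxE0, sq_pos_of_pos hm.1]

end toyChar

section toyRoot

variable {a p q τ : ℝ} {m μ lam : ℝ → ℝ}

theorem continuousOn_toyRoot (ha : a < 1) (hτ : 0 ≤ τ)
    (hm : ∀ c ≥ 0, IsUniquePosRoot (toyChar a τ c) (m c)) : ContinuousOn m (Ici 0) :=
  IsUniquePosRoot.continuousOn continuous_toyChar_param (fun _ _ => continuous_toyChar)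
    (fun _ _ => by rw [toyChar_zero]; linarith) (fun _ hc => tendsto_toyChar_atTop hc hτ) hm

theorem hasDerivAt_toyRoot (ha : a < 1) (hτ : 0 ≤ τ)
    (hm : ∀ c ≥ 0, IsUniquePosRoot (toyChar a τ c) (m c)) {c : ℝ} (hc : 0 < c) :
    HasDerivAt m (m c * toyRootLogDeriv a τ c (m c)) c := by
  have hF := (((hasStrictFDerivAt_snd (p := (c, m c)) (𝕜 := ℝ) (E := ℝ) (F := ℝ)).pow 2).sub
    (hasStrictFDerivAt_fst.mul hasStrictFDerivAt_snd)).sub_const 1 |>.add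
    ((((hasStrictFDerivAt_fst.mul_const τ).neg).mul hasStrictFDerivAt_snd).exp.const_mul a)
  have hDz := toyChar_deriv_z_pos ha.le hc.le hτ (hm c hc.le)
  have hroot : ∀ᶠ c' in 𝓝 c, toyChar a τ c' (m c') = 0 :=
    Filter.mem_of_superset (Ioi_mem_nhds hc) fun c' hc' => (hm c' (le_of_lt hc')).2.1
  refine (hF.hasDerivAt_of_implicit ?_ ((continuousOn_toyRoot ha hτ hm).continuousAt
    (Ici_mem_nhds hc)) hroot).congr_deriv ?_ <;>
    simp only [Nat.add_one_sub_one, pow_one, nsmul_eq_mul, Nat.cast_ofNat, Pi.mul_apply,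
      Pi.neg_apply, add_apply, sub_apply, smul_apply, neg_apply, ContinuousLinearMap.coe_fst',
      ContinuousLinearMap.coe_snd', smul_eq_mul]
  · convert hDz.ne' using 1
    ring
  · rw [toyRootLogDeriv]
    ring

theorem toyRootLogDeriv_lt {c m l : ℝ} (hp : 0 ≤ p) (hq : q ≤ 0) (hτ : 0 ≤ τ) (hm : 0 < m)
    (hml : m < l) (hDm : 0 < 2 * m - c - p * c * τ * exp (-(c * τ) * m))
    (hDl : 0 < 2 * l - c - q * c * τ * exp (-(c * τ) * l)) :
    toyRootLogDeriv q τ c l < toyRootLogDeriv p τ c m := by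
  unfold toyRootLogDeriv
  rw [div_lt_div_iff₀ hDl hDm]
  set Em := exp (-(c * τ) * m)
  set El := exp (-(c * τ) * l)
  have hpl : 0 ≤ p * Em * l := by have := hm.le.trans hml.le; positivity
  have hqm : 0 ≤ -q * El * m := by have := neg_nonneg.2 hq; positivity
  have hpos : 0 ≤ τ * (p * Em * l - q * El * m) := mul_nonneg hτ (by linarith)
  have hkey : (1 + p * τ * Em) * (2 * l - c - q * c * τ * El)
      - (1 + q * τ * El) * (2 * m - c - p * c * τ * Em)
      = 2 * (l - m) + 2 * (τ * (p * Em * l - q * El * m)) := by ring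
  linarith

theorem continuousOn_toyRoot_div (hp1 : p < 1) (hq : q < 0) (hτ : 0 ≤ τ)
    (hμ : ∀ c ≥ 0, IsUniquePosRoot (toyChar p τ c) (μ c))
    (hlam : ∀ c ≥ 0, IsUniquePosRoot (toyChar q τ c) (lam c)) :
    ContinuousOn (fun c => μ c / lam c) (Ici 0) :=
  (continuousOn_toyRoot hp1 hτ hμ).div (continuousOn_toyRoot (by linarith) hτ hlam)
    fun c hc => (hlam c hc).1.ne'

theorem strictMonoOn_toyRoot_div (hp0 : 0 ≤ p) (hp1 : p < 1) (hq : q < 0) (hτ : 0 ≤ τ)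
    (hμ : ∀ c ≥ 0, IsUniquePosRoot (toyChar p τ c) (μ c))
    (hlam : ∀ c ≥ 0, IsUniquePosRoot (toyChar q τ c) (lam c)) :
    StrictMonoOn (fun c => μ c / lam c) (Ici 0) := by
  refine strictMonoOn_of_deriv_pos (convex_Ici 0) (continuousOn_toyRoot_div hp1 hq hτ hμ hlam)
    fun c hc => ?_
  rw [interior_Ici, mem_Ioi] at hc
  have hl0 : 0 < lam c := (hlam c hc.le).1
  have hslope := toyRootLogDeriv_lt hp0 hq.le hτ (hμ c hc.le).1
    (toyRoot_lt_toyRoot (by linarith) hc.le hτ (hμ c hc.le) (hlam c hc.le))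
    (toyChar_deriv_z_pos hp1.le hc.le hτ (hμ c hc.le))
    (toyChar_deriv_z_pos (by linarith) hc.le hτ (hlam c hc.le))
  have hderiv : HasDerivAt (fun c => μ c / lam c) _ c :=
    (hasDerivAt_toyRoot hp1 hτ hμ hc).div (hasDerivAt_toyRoot (by linarith) hτ hlam hc) hl0.ne'
  rw [hderiv.deriv]
  have hsub := sub_pos.2 hslope
  have hμ0 : 0 < μ c := (hμ c hc.le).1
  -- the quotient-rule numerator is `μ λ (μ'/μ - λ'/λ)`
  rw [show ∀ x y u v : ℝ, (x * u * y - x * (y * v)) / y ^ 2 = x * y * (u - v) / y ^ 2 by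
    intros; ring]
  positivity

theorem tendsto_toyRoot_div_atTop (hp0 : 0 ≤ p) (hp1 : p < 1) (hq : q < 0) (hτ : 0 ≤ τ)
    (hμ : ∀ c ≥ 0, IsUniquePosRoot (toyChar p τ c) (μ c))
    (hlam : ∀ c ≥ 0, IsUniquePosRoot (toyChar q τ c) (lam c)) :
    Tendsto (fun c => μ c / lam c) atTop (𝓝 1) := by
  set B := √(1 - q)
  have hlow : Tendsto (fun c : ℝ => 1 - B / c) atTop (𝓝 1) := by
    simpa using tendsto_const_nhds.sub ((tendsto_const_nhds (x := B)).div_atTop tendsto_id)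
  refine tendsto_of_tendsto_of_tendsto_of_le_of_le' hlow tendsto_const_nhds ?_ ?_
  · filter_upwards [eventually_gt_atTop 0] with c hc
    have hcμ := lt_toyRoot hp1 hc.le hτ (hμ c hc.le)
    have hμl := toyRoot_lt_toyRoot (by linarith) hc.le hτ (hμ c hc.le) (hlam c hc.le)
    have hlB := toyRoot_le_add_sqrt hq.le hc.le hτ (hlam c hc.le)
    have hl0 : 0 < lam c := (hlam c hc.le).1
    have : (lam c - μ c) / lam c ≤ B / c :=
      (div_le_div_of_nonneg_right (by linarith) hl0.le).trans
        (div_le_div_of_nonneg_left (sqrt_nonneg _) hc (by linarith))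
    rw [sub_div, div_self hl0.ne'] at this
    linarith
  · filter_upwards [eventually_ge_atTop 0] with c hc
    exact (div_le_one (hlam c hc).1).2
      (toyRoot_lt_toyRoot (by linarith) hc hτ (hμ c hc) (hlam c hc)).le

end toyRoot

theorem div_mul_one_sub_sqrt_eq_inv_one_add_sqrt {p q : ℝ} (hp : p < 1) (hqp : q < p) :
    (1 - q) / (p - q) * (1 - √((1 - p) / (1 - q))) = (1 + √((1 - p) / (1 - q)))⁻¹ := by
  have hq : 0 < 1 - q := by linarith
  set s := √((1 - p) / (1 - q))
  have hs : s ^ 2 = (1 - p) / (1 - q) := sq_sqrt (div_nonneg (by linarith) hq.le)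
  have hs1 : s ≠ 1 := by
    rintro h
    rw [h, one_pow, eq_div_iff hq.ne'] at hs
    linarith
  have hpq : p - q = (1 - q) * ((1 - s) * (1 + s)) := by
    rw [show (1 - s) * (1 + s) = 1 - s ^ 2 by ring, hs]; field_simp; ring
  rw [hpq, div_mul_cancel_left₀ hq.ne', mul_inv, mul_comm, ← mul_assoc,
    mul_inv_cancel₀ (sub_ne_zero.2 hs1.symm), one_mul]

/-- For the `toy' model with `p ∈ (0,1)`, `q < 0`, `κ ∈ (0,1)` and
`κ(1 + √((1-p)/(1-q))) < 1`: the function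
`K(c) = (1-q)/(p-q) · (1 - μ₁(c)/λ₁(c))` satisfies
`K(0) = (1 + √((1-p)/(1-q)))⁻¹ > κ`, `K(c) → 0` as `c → ∞`, `K` is continuous
and strictly decreasing on `(0,∞)`, and the equation `K(c) = κ` has a unique
positive solution. -/
theorem toy_unique_speed (p q κ τ : ℝ) (hp : p ∈ Set.Ioo (0 : ℝ) 1) (hq : q < 0)
    (hκ : κ ∈ Set.Ioo (0 : ℝ) 1) (hτ : 0 ≤ τ)
    (hsmall : κ * (1 + Real.sqrt ((1 - p) / (1 - q))) < 1)
    (μ₁ lam₁ : ℝ → ℝ)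
    (hμ : ∀ c ≥ (0 : ℝ), 0 < μ₁ c ∧
      (μ₁ c) ^ 2 - c * μ₁ c - 1 + p * Real.exp (-(c * τ) * μ₁ c) = 0 ∧
      ∀ z > (0 : ℝ), z ^ 2 - c * z - 1 + p * Real.exp (-(c * τ) * z) = 0 → z = μ₁ c)
    (hlam : ∀ c ≥ (0 : ℝ), 0 < lam₁ c ∧
      (lam₁ c) ^ 2 - c * lam₁ c - 1 + q * Real.exp (-(c * τ) * lam₁ c) = 0 ∧
      ∀ z > (0 : ℝ), z ^ 2 - c * z - 1 + q * Real.exp (-(c * τ) * z) = 0 → z = lam₁ c) :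
    ((1 - q) / (p - q) * (1 - μ₁ 0 / lam₁ 0)
        = (1 + Real.sqrt ((1 - p) / (1 - q)))⁻¹) ∧
    κ < (1 - q) / (p - q) * (1 - μ₁ 0 / lam₁ 0) ∧
    Filter.Tendsto (fun c : ℝ => (1 - q) / (p - q) * (1 - μ₁ c / lam₁ c))
      Filter.atTop (nhds 0) ∧
    ContinuousOn (fun c : ℝ => (1 - q) / (p - q) * (1 - μ₁ c / lam₁ c))
      (Set.Ioi 0) ∧
    StrictAntiOn (fun c : ℝ => (1 - q) / (p - q) * (1 - μ₁ c / lam₁ c))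
      (Set.Ioi 0) ∧
    ∃! c : ℝ, 0 < c ∧ (1 - q) / (p - q) * (1 - μ₁ c / lam₁ c) = κ := by
  obtain ⟨hp0, hp1⟩ := hp
  have hC : 0 < (1 - q) / (p - q) := div_pos (by linarith) (by linarith)
  set K := fun c : ℝ => (1 - q) / (p - q) * (1 - μ₁ c / lam₁ c)
  have hcont : ContinuousOn K (Ici 0) :=
    continuousOn_const.mul (continuousOn_const.sub (continuousOn_toyRoot_div hp1 hq hτ hμ hlam))
  have hanti : StrictAntiOn K (Ioi 0) := fun c hc c' hc' hcc' =>
    mul_lt_mul_of_pos_left (sub_lt_sub_left (strictMonoOn_toyRoot_div hp0.le hp1 hq hτ hμ hlam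
      (Ioi_subset_Ici_self hc) (Ioi_subset_Ici_self hc') hcc') 1) hC
  have hlim : Tendsto K atTop (𝓝 0) := by
    simpa using ((tendsto_const_nhds (x := (1 : ℝ))).sub
      (tendsto_toyRoot_div_atTop hp0.le hp1 hq hτ hμ hlam)).const_mul ((1 - q) / (p - q))
  have hK0 : K 0 = (1 + √((1 - p) / (1 - q)))⁻¹ := by
    simp only [K]
    rw [toyRoot_zero hp1 (hμ 0 le_rfl), toyRoot_zero (by linarith) (hlam 0 le_rfl),
      ← sqrt_div' _ (by linarith)]
    exact div_mul_one_sub_sqrt_eq_inv_one_add_sqrt hp1 (by linarith)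
  have hκK0 : κ < K 0 := by
    rw [hK0, ← one_div, lt_div_iff₀ (by positivity)]
    exact hsmall
  exact ⟨hK0, hκK0, hlim, hcont.mono Ioi_subset_Ici_self, hanti,
    existsUnique_pos_eq_of_strictAntiOn hcont hanti hκK0 hlim hκ.1⟩
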